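/- arXiv:2009.13121 — 2 statements merged into one kernel-verified Lean document; each statement's English description precedes it below -/
import Mathlib

section
/- Let A ∈ C¹_♯(Y_d)^{d×d} be a ℤ^d-periodic C¹ matrix-valued field which is symmetric and positive semi-definite at every point, and let v ∈ C²_♯(Y_d). Set b := A∇v, a vector field in C¹_♯(Y_d)^d. Then the flow X associated with b satisfies the null asymptotics: for every x ∈ ℝ^d, X(t,x)/t → 0 as t → ∞. -/
open MeasureTheory Filter Matrix

noncomputable section

/-- A function on `ℝ^d` is `ℤ^d`-periodic. -/
def ZdPeriodic {d : ℕ} {E : Type*} (f : (Fin d → ℝ) → E) : Prop :=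
  ∀ (κ : Fin d → ℤ) (x : Fin d → ℝ), f (x + fun i => (κ i : ℝ)) = f x

/-- The unit cube `[0,1)^d`, a fundamental domain for the torus `Y_d = ℝ^d/ℤ^d`. -/
def unitCube (d : ℕ) : Set (Fin d → ℝ) := {x | ∀ i, x i ∈ Set.Ico (0 : ℝ) 1}

/-- `X` is the global flow of the vector field `b`: `∂X/∂t(t,x) = b(X(t,x))`, `X(0,x) = x`. -/
def IsFlowOf {d : ℕ} (b : (Fin d → ℝ) → (Fin d → ℝ))
    (X : ℝ → (Fin d → ℝ) → (Fin d → ℝ)) : Prop :=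
  ∀ x : Fin d → ℝ, X 0 x = x ∧ ∀ t : ℝ, HasDerivAt (fun s => X s x) (b (X t x)) t

/-- A measure `μ` on the torus `Y_d` (identified with a measure on `ℝ^d` carried by the unit
cube) is invariant for the flow `X`: `∫ ψ(X(t,y)) dμ = ∫ ψ dμ` for all `t` and all continuous
`ℤ^d`-periodic `ψ`. -/
def FlowInvariant {d : ℕ} (X : ℝ → (Fin d → ℝ) → (Fin d → ℝ))
    (μ : Measure (Fin d → ℝ)) : Prop :=
  ∀ (t : ℝ) (ψ : (Fin d → ℝ) → ℝ), Continuous ψ → ZdPeriodic ψ →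
    ∫ y, ψ (X t y) ∂μ = ∫ y, ψ y ∂μ

/-- Herman's rotation set `C_b = {∫ b dμ : μ invariant probability measure for the flow}`. -/
def rotationSet {d : ℕ} (b : (Fin d → ℝ) → (Fin d → ℝ))
    (X : ℝ → (Fin d → ℝ) → (Fin d → ℝ)) : Set (Fin d → ℝ) :=
  {ζ | ∃ μ : Measure (Fin d → ℝ), IsProbabilityMeasure μ ∧ μ (unitCube d)ᶜ = 0 ∧
        FlowInvariant X μ ∧ ζ = ∫ y, b y ∂μ}

/-- The gradient of a scalar function on `ℝ^d`. -/
def grad {d : ℕ} (ψ : (Fin d → ℝ) → ℝ) (y : Fin d → ℝ) : Fin d → ℝ :=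
  fun i => fderiv ℝ ψ y (Pi.single i 1)

open Set Asymptotics Topology

/-! Cauchy–Schwarz for the semi-definite form `(u, w) ↦ u ⬝ᵥ A w` gives
`‖A ∇v‖² ≤ tr A · (∇v ⬝ᵥ A ∇v)`: the squared speed of a trajectory is at most a constant times the
derivative of `v` along the flow. With `‖Ẋ‖ ≤ δ + ‖Ẋ‖² / (4δ)` this yields
`‖X(t,x) - x‖ ≤ δ t + (osc v) · sup tr A / (4δ)` for every `δ > 0`, and both `v` and `tr A` are
bounded by periodicity. -/

namespace Matrix

variable {n : Type*} [Fintype n] {A : Matrix n n ℝ}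

theorem PosSemidef.dotProduct_mulVec_sq_le (hA : A.PosSemidef) (u w : n → ℝ) :
    (u ⬝ᵥ A *ᵥ w) ^ 2 ≤ (u ⬝ᵥ A *ᵥ u) * (w ⬝ᵥ A *ᵥ w) := by
  have hsymm : w ⬝ᵥ A *ᵥ u = u ⬝ᵥ A *ᵥ w := by
    rw [dotProduct_mulVec, ← mulVec_transpose, dotProduct_comm,
      ← conjTranspose_eq_transpose_of_trivial, hA.isHermitian.eq]
  have hquad : ∀ t : ℝ,
      0 ≤ (w ⬝ᵥ A *ᵥ w) * (t * t) + 2 * (u ⬝ᵥ A *ᵥ w) * t + u ⬝ᵥ A *ᵥ u := by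
    intro t
    have hnonneg := hA.dotProduct_mulVec_nonneg (u + t • w)
    simp only [star_trivial, mulVec_add, mulVec_smul, dotProduct_add, add_dotProduct,
      dotProduct_smul, smul_dotProduct, smul_eq_mul, hsymm] at hnonneg
    linarith
  have hdiscrim := discrim_le_zero hquad
  rw [discrim] at hdiscrim
  linarith

theorem PosSemidef.mulVec_apply_sq_le [DecidableEq n] (hA : A.PosSemidef) (w : n → ℝ) (i : n) :
    (A *ᵥ w) i ^ 2 ≤ A i i * (w ⬝ᵥ A *ᵥ w) := by
  simpa [single_dotProduct, mulVec_single_one] using hA.dotProduct_mulVec_sq_le (Pi.single i 1) w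

theorem PosSemidef.norm_mulVec_sq_le (hA : A.PosSemidef) (w : n → ℝ) :
    ‖A *ᵥ w‖ ^ 2 ≤ A.trace * (w ⬝ᵥ A *ᵥ w) := by
  classical
  have hq : 0 ≤ w ⬝ᵥ A *ᵥ w := by simpa using hA.dotProduct_mulVec_nonneg w
  have hnorm : ‖A *ᵥ w‖ ≤ √(A.trace * (w ⬝ᵥ A *ᵥ w)) := by
    refine (pi_norm_le_iff_of_nonneg (Real.sqrt_nonneg _)).2 fun i => ?_
    refine Real.abs_le_sqrt ((hA.mulVec_apply_sq_le w i).trans ?_)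
    exact mul_le_mul_of_nonneg_right
      (Finset.single_le_sum (f := fun j => A j j) (fun j _ => hA.diag_nonneg)
        (Finset.mem_univ i)) hq
  exact (Real.le_sqrt (norm_nonneg _) (mul_nonneg hA.trace_nonneg hq)).1 hnorm

end Matrix

theorem ZdPeriodic.isCompact_range {d : ℕ} {E : Type*} [TopologicalSpace E]
    {f : (Fin d → ℝ) → E} (hf : ZdPeriodic f) (hc : Continuous f) : IsCompact (range f) := by
  have hsub : range f ⊆ f '' Icc 0 1 := by
    rintro _ ⟨y, rfl⟩
    refine ⟨fun i => Int.fract (y i),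
      mem_Icc.2 ⟨fun i => Int.fract_nonneg (y i), fun i => (Int.fract_lt_one (y i)).le⟩, ?_⟩
    convert hf (fun i => -⌊y i⌋) y using 2
    ext i
    simp [Int.fract, sub_eq_add_neg]
  rw [hsub.antisymm (image_subset_range _ _)]
  exact isCompact_Icc.image hc

theorem fderiv_apply_eq_grad_dotProduct {d : ℕ} (ψ : (Fin d → ℝ) → ℝ) (y w : Fin d → ℝ) :
    fderiv ℝ ψ y w = grad ψ y ⬝ᵥ w := by
  conv_lhs => rw [pi_eq_sum_univ' w]
  simp [grad, dotProduct, mul_comm]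

section SquareSpeedControl

variable {E : Type*} [NormedAddCommGroup E] [NormedSpace ℝ E] {γ γ' : ℝ → E} {W W' : ℝ → ℝ}

theorem norm_sub_le_of_sq_norm_deriv_le (hγ : ∀ s, HasDerivAt γ (γ' s) s)
    (hW : ∀ s, HasDerivAt W (W' s) s) (hbound : ∀ s, ‖γ' s‖ ^ 2 ≤ W' s) {δ : ℝ} (hδ : 0 < δ)
    {t : ℝ} (ht : 0 ≤ t) : ‖γ t - γ 0‖ ≤ δ * t + (W t - W 0) / (4 * δ) := by
  have hspeed : ∀ s, ‖γ' s‖ ≤ δ * 1 + W' s / (4 * δ) := fun s => by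
    have hamgm : δ + ‖γ' s‖ ^ 2 / (4 * δ) - ‖γ' s‖ = (‖γ' s‖ - 2 * δ) ^ 2 / (4 * δ) := by
      field_simp
      ring
    calc ‖γ' s‖ ≤ δ + ‖γ' s‖ ^ 2 / (4 * δ) := by
          rw [← sub_nonneg, hamgm]
          positivity
      _ ≤ δ * 1 + W' s / (4 * δ) := by
          rw [mul_one]
          gcongr
          exact hbound s
  have hγc : Continuous γ := continuous_iff_continuousAt.2 fun s => (hγ s).continuousAt
  refine image_norm_le_of_norm_deriv_right_le_deriv_boundary (f := fun s => γ s - γ 0)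
    (hγc.sub continuous_const).continuousOn
    (fun s _ => ((hγ s).sub_const _).hasDerivWithinAt) (by simp)
    (fun s => ((hasDerivAt_id s).const_mul δ).add (((hW s).sub_const _).div_const _))
    (fun s _ => hspeed s) ⟨ht, le_rfl⟩

theorem tendsto_inv_smul_nhds_zero_of_sq_norm_deriv_le (hγ : ∀ s, HasDerivAt γ (γ' s) s)
    (hW : ∀ s, HasDerivAt W (W' s) s) (hbound : ∀ s, ‖γ' s‖ ^ 2 ≤ W' s) {M : ℝ}
    (hM : ∀ t, W t ≤ M) : Tendsto (fun t => t⁻¹ • γ t) atTop (𝓝 0) := by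
  refine IsLittleO.tendsto_inv_smul_nhds_zero (g := fun t => t) (isLittleO_iff.2 fun c hc => ?_)
  set K := ‖γ 0‖ + (M - W 0) / (2 * c)
  filter_upwards [eventually_ge_atTop (max 0 (2 * K / c))] with t ht
  have ht0 : 0 ≤ t := le_of_max_le_left ht
  have hKt : 2 * K ≤ t * c := (div_le_iff₀ hc).1 (le_of_max_le_right ht)
  have hdisp := norm_sub_le_of_sq_norm_deriv_le hγ hW hbound (half_pos hc) ht0
  have hWM : (W t - W 0) / (4 * (c / 2)) ≤ (M - W 0) / (2 * c) := by
    rw [show 4 * (c / 2) = 2 * c by ring]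
    gcongr
    exact hM t
  rw [Real.norm_of_nonneg ht0]
  calc ‖γ t‖ ≤ ‖γ 0‖ + ‖γ t - γ 0‖ := norm_le_norm_add_norm_sub' _ _
    _ ≤ K + c / 2 * t := by linarith
    _ ≤ c * t := by linarith

end SquareSpeedControl

theorem flow_asymptotics_current_field_general {d : ℕ}
    (A : (Fin d → ℝ) → Matrix (Fin d) (Fin d) ℝ)
    (hA : ∀ i j, ContDiff ℝ 1 fun y => A y i j)
    (hAper : ZdPeriodic A)
    (hApsd : ∀ y, (A y).PosSemidef)
    (v : (Fin d → ℝ) → ℝ) (hv : ContDiff ℝ 2 v) (hvper : ZdPeriodic v)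
    (X : ℝ → (Fin d → ℝ) → (Fin d → ℝ))
    (hX : IsFlowOf (fun y => A y *ᵥ grad v y) X) :
    ∀ x : Fin d → ℝ, Tendsto (fun t : ℝ => t⁻¹ • X t x) atTop (nhds 0) := by
  intro x
  have hAc : Continuous A := continuous_pi fun i => continuous_pi fun j => (hA i j).continuous
  obtain ⟨C, hC⟩ : BddAbove (range fun y => (A y).trace) :=
    (ZdPeriodic.isCompact_range (fun κ y => by simp only [hAper κ y])
      hAc.matrix_trace).bddAbove
  obtain ⟨V, hV⟩ := (hvper.isCompact_range hv.continuous).bddAbove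
  have hC0 : 0 ≤ C := (hApsd 0).trace_nonneg.trans (hC (mem_range_self 0))
  refine tendsto_inv_smul_nhds_zero_of_sq_norm_deriv_le (W := fun t => C * v (X t x))
    (W' := fun t => C * (grad v (X t x) ⬝ᵥ A (X t x) *ᵥ grad v (X t x))) (M := C * V)
    (fun t => (hX x).2 t) (fun t => ?_) (fun t => ?_) (fun t => ?_)
  · have hchain := ((hv.differentiable two_ne_zero (X t x)).hasFDerivAt.comp_hasDerivAt t
      ((hX x).2 t)).const_mul C
    rwa [Function.comp_def, fderiv_apply_eq_grad_dotProduct] at hchain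
  · have hq := (hApsd (X t x)).dotProduct_mulVec_nonneg (grad v (X t x))
    rw [star_trivial] at hq
    exact ((hApsd _).norm_mulVec_sq_le _).trans
      (mul_le_mul_of_nonneg_right (hC (mem_range_self _)) hq)
  · exact mul_le_mul_of_nonneg_left (hV (mem_range_self _)) hC0

/-- If `A ∈ C¹_♯(Y_d)^{d×d}` is symmetric positive semi-definite at every
point and `v ∈ C²_♯(Y_d)`, then the flow `X` of the current field `b := A∇v` satisfies the
null asymptotics `X(t,x)/t → 0` as `t → ∞`, for every `x ∈ ℝ^d`. -/
theorem flow_asymptotics_current_field {d : ℕ} (hd : 1 ≤ d)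
    (A : (Fin d → ℝ) → Matrix (Fin d) (Fin d) ℝ)
    (hA : ∀ i j, ContDiff ℝ 1 fun y => A y i j)
    (hAper : ZdPeriodic A)
    (hAsymm : ∀ y, (A y).IsSymm)
    (hApsd : ∀ y, (A y).PosSemidef)
    (v : (Fin d → ℝ) → ℝ) (hv : ContDiff ℝ 2 v) (hvper : ZdPeriodic v)
    (X : ℝ → (Fin d → ℝ) → (Fin d → ℝ))
    (hX : IsFlowOf (fun y => A y *ᵥ grad v y) X) :
    ∀ x : Fin d → ℝ, Tendsto (fun t : ℝ => t⁻¹ • X t x) atTop (nhds 0) :=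
  flow_asymptotics_current_field_general A hA hAper hApsd v hv hvper X hX
end
end

section
/- Let b ∈ C¹_♯(Y_d)^d with flow X, and let Ψ be a C²-diffeomorphism on Y_d, i.e., Ψ : ℝ^d → ℝ^d is a C² diffeomorphism of ℝ^d with det(∇Ψ(x)) ≠ 0 for all x, and Ψ(x) = Ax + Ψ_♯(x) where A ∈ ℤ^{d×d} with |det A| = 1 and Ψ_♯ ∈ C²_♯(Y_d)^d. Define b̃(x) := ∇Ψ(Ψ⁻¹(x)) b(Ψ⁻¹(x)). Then b̃ ∈ C¹_♯(Y_d)^d, its flow is X̃(t,x) = Ψ(X(t,Ψ⁻¹(x))), the rotation set C_{b̃} is a singleton if and only if C_b is a singleton, and in that case C_b = {ζ} implies C_{b̃} = {Aζ}. -/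
open MeasureTheory Filter Matrix

noncomputable section

/-!
The diffeomorphism conjugates the flows, `X̃ t ∘ Ψ = Ψ ∘ X t`, and shifts integer translates by
the linear part `A`, so `x ↦ fract (Ψ x)` pushes invariant measures of `X` on the torus forward to
invariant measures of `X̃`. Differentiating the conjugacy at `t = 0` gives
`b̃ ∘ Ψ = ∇Ψ b = A b + ∇Ψ_♯ b`, and `∫ ∇Ψ_♯ b dμ = d/dt|₀ ∫ Ψ_♯ ∘ X t dμ = 0` by invariance, so
the push-forward sends the rotation vector `∫ b dμ` to `A ∫ b dμ`. The same argument for `Ψ⁻¹`,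
whose linear part `A⁻¹` is again an integer matrix since `|det A| = 1`, shows that `ζ ↦ A ζ` is a
bijection from `C_b` onto `C_b̃`.
-/

open Function Set

variable {d : ℕ}

section Periodic

def fractVec (x : Fin d → ℝ) : Fin d → ℝ := fun i => Int.fract (x i)

lemma fractVec_mem_unitCube (x : Fin d → ℝ) : fractVec x ∈ unitCube d :=
  fun _ => ⟨Int.fract_nonneg _, Int.fract_lt_one _⟩

lemma fractVec_add_floor (x : Fin d → ℝ) : (fractVec x + fun i => (⌊x i⌋ : ℝ)) = x :=
  funext fun i => Int.fract_add_floor (x i)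

lemma measurable_fractVec : Measurable (fractVec : (Fin d → ℝ) → Fin d → ℝ) :=
  measurable_pi_lambda _ fun i => (measurable_pi_apply i).fract

variable {E F : Type*}

lemma ZdPeriodic.apply_fractVec {f : (Fin d → ℝ) → E} (hf : ZdPeriodic f) (x : Fin d → ℝ) :
    f (fractVec x) = f x := by
  conv_rhs => rw [← fractVec_add_floor x]
  exact (hf _ _).symm

variable [NormedAddCommGroup E]

lemma ZdPeriodic.exists_norm_le {f : (Fin d → ℝ) → E} (hf : ZdPeriodic f) (hc : Continuous f) :
    ∃ C, ∀ x, ‖f x‖ ≤ C := by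
  obtain ⟨C, hC⟩ := isBounded_iff_forall_norm_le.1
    (isCompact_Icc (a := (0 : Fin d → ℝ)) (b := 1) |>.image hc).isBounded
  refine ⟨C, fun x => hf.apply_fractVec x ▸ hC _ ⟨fractVec x, ⟨?_, ?_⟩, rfl⟩⟩
  exacts [fun i => (fractVec_mem_unitCube x i).1, fun i => (fractVec_mem_unitCube x i).2.le]

lemma ZdPeriodic.integrable_comp {f : (Fin d → ℝ) → E} (hf : ZdPeriodic f) (hc : Continuous f)
    {α : Type*} [MeasurableSpace α] [TopologicalSpace α] [OpensMeasurableSpace α]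
    [SecondCountableTopology α] {μ : Measure α} [IsFiniteMeasure μ]
    {φ : α → Fin d → ℝ} (hφ : Continuous φ) : Integrable (fun a => f (φ a)) μ :=
  have ⟨C, hC⟩ := hf.exists_norm_le hc
  .of_bound (hc.comp hφ).aestronglyMeasurable C (.of_forall fun _ => hC _)

lemma ZdPeriodic.integrable {f : (Fin d → ℝ) → E} (hf : ZdPeriodic f) (hc : Continuous f)
    {μ : Measure (Fin d → ℝ)} [IsFiniteMeasure μ] :
    Integrable f μ :=
  hf.integrable_comp hc continuous_id

variable [NormedSpace ℝ E] [NormedAddCommGroup F] [NormedSpace ℝ F]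

lemma fderiv_add_eq_of_forall_add_eq_add_const {f : F → E} {c : F} {v : E}
    (h : ∀ x, f (x + c) = f x + v) (x : F) : fderiv ℝ f (x + c) = fderiv ℝ f x := by
  rw [← fderiv_comp_add_right, funext h, fderiv_add_const]

lemma ZdPeriodic.fderiv {f : (Fin d → ℝ) → E} (hf : ZdPeriodic f) : ZdPeriodic (fderiv ℝ f) :=
  fun κ => fderiv_add_eq_of_forall_add_eq_add_const fun x => by rw [hf, add_zero]

lemma ZdPeriodic.exists_lipschitzWith {f : (Fin d → ℝ) → E} (hf : ZdPeriodic f)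
    (hc : ContDiff ℝ 1 f) : ∃ K, LipschitzWith K f := by
  obtain ⟨C, hC⟩ := hf.fderiv.exists_norm_le (hc.continuous_fderiv one_ne_zero)
  refine ⟨C.toNNReal, lipschitzWith_of_nnnorm_fderiv_le (hc.differentiable one_ne_zero) fun x => ?_⟩
  rw [← NNReal.coe_le_coe, coe_nnnorm]
  exact (hC x).trans (Real.le_coe_toNNReal C)

end Periodic

section Equivariant

/-- `f` lifts a map of the torus acting on `π₁ = ℤ^d` by `M`. -/
def ZdEquivariant (M : Matrix (Fin d) (Fin d) ℤ) (f : (Fin d → ℝ) → (Fin d → ℝ)) : Prop :=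
  ∀ (κ : Fin d → ℤ) (x : Fin d → ℝ), f (x + fun i => (κ i : ℝ)) = f x + fun i => ((M *ᵥ κ) i : ℝ)

lemma intCast_mulVec (M : Matrix (Fin d) (Fin d) ℤ) (κ : Fin d → ℤ) :
    (M.map (Int.cast : ℤ → ℝ) *ᵥ fun i => (κ i : ℝ)) = fun i => ((M *ᵥ κ) i : ℝ) :=
  funext fun i => ((Int.castRingHom ℝ).map_mulVec M κ i).symm

variable {M N : Matrix (Fin d) (Fin d) ℤ} {f g : (Fin d → ℝ) → (Fin d → ℝ)}

lemma zdEquivariant_of_eq_mulVec_add {fs : (Fin d → ℝ) → (Fin d → ℝ)}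
    (hf : ∀ x, f x = M.map (Int.cast : ℤ → ℝ) *ᵥ x + fs x) (hfs : ZdPeriodic fs) :
    ZdEquivariant M f := by
  intro κ x
  rw [hf, hf x, Matrix.mulVec_add, hfs, intCast_mulVec]
  abel

lemma ZdEquivariant.zdPeriodic_sub_mulVec (hf : ZdEquivariant M f) :
    ZdPeriodic fun x => f x - M.map (Int.cast : ℤ → ℝ) *ᵥ x := by
  intro κ x
  simp only [hf κ x, Matrix.mulVec_add, intCast_mulVec]
  abel

lemma ZdEquivariant.of_inverse (hf : ZdEquivariant M f)
    (hMN : M * N = 1) (hl : LeftInverse g f) (hr : RightInverse g f) : ZdEquivariant N g := by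
  intro κ x
  rw [← hl (g x + _), hf, hr x, Matrix.mulVec_mulVec, hMN, Matrix.one_mulVec]

lemma ZdPeriodic.comp_zdEquivariant {E : Type*} {ψ : (Fin d → ℝ) → E} (hψ : ZdPeriodic ψ)
    (hf : ZdEquivariant M f) : ZdPeriodic (ψ ∘ f) :=
  fun κ x => (congrArg ψ (hf κ x)).trans (hψ _ _)

lemma ZdEquivariant.fderiv_add (hf : ZdEquivariant M f) (κ : Fin d → ℤ) (x : Fin d → ℝ) :
    fderiv ℝ f (x + fun i => (κ i : ℝ)) = fderiv ℝ f x :=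
  fderiv_add_eq_of_forall_add_eq_add_const (hf κ) x

end Equivariant

namespace IsFlowOf

variable {b b' : (Fin d → ℝ) → (Fin d → ℝ)} {X X' : ℝ → (Fin d → ℝ) → (Fin d → ℝ)} {K : NNReal}

lemma continuous_curve (hX : IsFlowOf b X) (x : Fin d → ℝ) : Continuous fun t => X t x :=
  continuous_iff_continuousAt.2 fun t => ((hX x).2 t).continuousAt

lemma neg (hX : IsFlowOf b X) : IsFlowOf (-b) fun t => X (-t) := fun x =>
  ⟨by simpa using (hX x).1, fun t => by
    simpa [Function.comp_def] using ((hX x).2 (-t)).scomp t (hasDerivAt_neg t)⟩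

lemma dist_le_of_nonneg (hb : LipschitzWith K b) (hX : IsFlowOf b X) {t : ℝ} (ht : 0 ≤ t)
    (x y : Fin d → ℝ) : dist (X t x) (X t y) ≤ dist x y * Real.exp (K * t) := by
  simpa [(hX x).1, (hX y).1] using dist_le_of_trajectories_ODE (fun _ => hb)
    (hX.continuous_curve x).continuousOn (fun s _ => ((hX x).2 s).hasDerivWithinAt)
    (hX.continuous_curve y).continuousOn (fun s _ => ((hX y).2 s).hasDerivWithinAt)
    le_rfl t ⟨ht, le_rfl⟩

lemma continuous_of_nonneg (hb : LipschitzWith K b) (hX : IsFlowOf b X) {t : ℝ} (ht : 0 ≤ t) :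
    Continuous (X t) :=
  (LipschitzWith.of_dist_le_mul fun x y => by
    rw [Real.coe_toNNReal _ (Real.exp_nonneg _), mul_comm]
    exact hX.dist_le_of_nonneg hb ht x y).continuous

lemma continuous (hb : LipschitzWith K b) (hX : IsFlowOf b X) (t : ℝ) : Continuous (X t) := by
  rcases le_total 0 t with ht | ht
  · exact hX.continuous_of_nonneg hb ht
  · simpa using hX.neg.continuous_of_nonneg hb.neg (neg_nonneg.2 ht)

lemma zdEquivariant (hb : LipschitzWith K b) (hbper : ZdPeriodic b) (hX : IsFlowOf b X)
    (t : ℝ) : ZdEquivariant 1 (X t) := by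
  intro κ x
  rw [Matrix.one_mulVec]
  refine congrFun (ODE_solution_unique_univ (v := fun _ => b) (s := fun _ => univ) (t₀ := 0)
    (f := fun s => X s (x + _)) (g := fun s => X s x + _)
    (fun _ => hb.lipschitzOnWith) (fun s => ⟨(hX _).2 s, trivial⟩) (fun s => ⟨?_, trivial⟩) ?_) t
  · rw [hbper]
    exact ((hX x).2 s).add_const _
  · simp [(hX _).1]

lemma conj {Ψ Ψinv : (Fin d → ℝ) → (Fin d → ℝ)} (hX : IsFlowOf b X) (hΨ : Differentiable ℝ Ψ)
    (hl : LeftInverse Ψinv Ψ) (hr : RightInverse Ψinv Ψ) :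
    IsFlowOf (fun x => fderiv ℝ Ψ (Ψinv x) (b (Ψinv x))) fun t x => Ψ (X t (Ψinv x)) :=
  fun x => ⟨by simp [(hX _).1, hr x], fun t => by
    simpa [hl _, Function.comp_def] using (hΨ _).hasFDerivAt.comp_hasDerivAt t ((hX (Ψinv x)).2 t)⟩

lemma apply_eq_fderiv_of_semiconj {Φ : (Fin d → ℝ) → (Fin d → ℝ)} (hX : IsFlowOf b X)
    (hX' : IsFlowOf b' X') {x : Fin d → ℝ} (hΦ : DifferentiableAt ℝ Φ x)
    (hconj : ∀ t, X' t (Φ x) = Φ (X t x)) : b' (Φ x) = fderiv ℝ Φ x (b x) := by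
  have h' := (hX' (Φ x)).2 0
  have hΦ0 : DifferentiableAt ℝ Φ (X 0 x) := by rwa [(hX x).1]
  have h := hΦ0.hasFDerivAt.comp_hasDerivAt 0 ((hX x).2 0)
  rw [(hX x).1] at h
  rw [(hX' (Φ x)).1, funext hconj] at h'
  exact h'.unique h

end IsFlowOf

namespace FlowInvariant

variable {b : (Fin d → ℝ) → (Fin d → ℝ)} {X X' : ℝ → (Fin d → ℝ) → (Fin d → ℝ)}
  {μ : Measure (Fin d → ℝ)} {ι : Type*} [Fintype ι]

lemma integral_comp_eq [IsFiniteMeasure μ] (hμ : FlowInvariant X μ) {g : (Fin d → ℝ) → ι → ℝ}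
    (hg : Continuous g) (hgper : ZdPeriodic g) {t : ℝ} (hXt : Continuous (X t)) :
    ∫ y, g (X t y) ∂μ = ∫ y, g y ∂μ := by
  funext i
  rw [eval_integral (hgper.integrable_comp hg hXt).eval,
    eval_integral (hgper.integrable hg).eval]
  exact hμ t _ ((continuous_apply i).comp hg) fun κ x => congrFun (hgper κ x) i

lemma integral_fderiv_apply_eq_zero [IsFiniteMeasure μ] (hμ : FlowInvariant X μ)
    (hb : Continuous b) (hbper : ZdPeriodic b) (hX : IsFlowOf b X)
    (hXc : ∀ t, Continuous (X t)) {g : (Fin d → ℝ) → ι → ℝ} (hg : ContDiff ℝ 1 g)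
    (hgper : ZdPeriodic g) : ∫ x, fderiv ℝ g x (b x) ∂μ = 0 := by
  set F' : ℝ → (Fin d → ℝ) → ι → ℝ := fun t x => fderiv ℝ g (X t x) (b (X t x))
  have hF'c : ∀ t, Continuous (F' t) := fun t =>
    ((hg.continuous_fderiv one_ne_zero).comp (hXc t)).clm_apply (hb.comp (hXc t))
  obtain ⟨L, hL⟩ := hgper.fderiv.exists_norm_le (hg.continuous_fderiv one_ne_zero)
  obtain ⟨C, hC⟩ := hbper.exists_norm_le hb
  have hbound : ∀ t x, ‖F' t x‖ ≤ L * C := fun t x =>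
    ((fderiv ℝ g _).le_opNorm _).trans
      (mul_le_mul (hL _) (hC _) (norm_nonneg _) ((norm_nonneg _).trans (hL 0)))
  have hdiff : ∀ x t, HasDerivAt (fun t => g (X t x)) (F' t x) t := fun x t =>
    ((hg.differentiable one_ne_zero) _).hasFDerivAt.comp_hasDerivAt t ((hX x).2 t)
  have hderiv := (hasDerivAt_integral_of_dominated_loc_of_deriv_le (μ := μ)
    (F := fun t x => g (X t x)) (x₀ := 0) univ_mem
    (.of_forall fun t => (hg.continuous.comp (hXc t)).aestronglyMeasurable)
    (hgper.integrable_comp hg.continuous (hXc 0)) (hF'c 0).aestronglyMeasurable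
    (.of_forall fun x t _ => hbound t x) (integrable_const _)
    (.of_forall fun x t _ => hdiff x t)).2
  rw [funext fun t => hμ.integral_comp_eq hg.continuous hgper (hXc t)] at hderiv
  simpa [F', (hX _).1] using hderiv.unique (hasDerivAt_const (0 : ℝ) _)

lemma integral_fderiv_apply_eq_mulVec [IsFiniteMeasure μ] (hμ : FlowInvariant X μ)
    (hb : Continuous b) (hbper : ZdPeriodic b) (hX : IsFlowOf b X)
    (hXc : ∀ t, Continuous (X t)) {Φ : (Fin d → ℝ) → (Fin d → ℝ)}
    {M : Matrix (Fin d) (Fin d) ℤ} (hΦ : ContDiff ℝ 1 Φ) (hΦM : ZdEquivariant M Φ) :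
    ∫ x, fderiv ℝ Φ x (b x) ∂μ = M.map (Int.cast : ℤ → ℝ) *ᵥ ∫ x, b x ∂μ := by
  set L : (Fin d → ℝ) →L[ℝ] (Fin d → ℝ) :=
    LinearMap.toContinuousLinearMap (Matrix.toLin' (M.map Int.cast))
  set Φs : (Fin d → ℝ) → (Fin d → ℝ) := fun x => Φ x - L x
  have hΦs : ContDiff ℝ 1 Φs := hΦ.sub L.contDiff
  have hΦsper : ZdPeriodic Φs := hΦM.zdPeriodic_sub_mulVec
  have hsplit : ∀ x, fderiv ℝ Φ x (b x) = L (b x) + fderiv ℝ Φs x (b x) := fun x => by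
    rw [((hΦ.differentiable one_ne_zero x).hasFDerivAt.fun_sub L.hasFDerivAt).fderiv]
    simp
  have hbint : Integrable b μ := hbper.integrable hb
  have hΦsbint : Integrable (fun x => fderiv ℝ Φs x (b x)) μ :=
    ZdPeriodic.integrable (fun κ x => by simp only [hΦsper.fderiv κ x, hbper κ x])
      ((hΦs.continuous_fderiv one_ne_zero).clm_apply hb)
  rw [integral_congr_ae (.of_forall hsplit), integral_add (L.integrable_comp hbint) hΦsbint,
    hμ.integral_fderiv_apply_eq_zero hb hbper hX hXc hΦs hΦsper, add_zero,
    L.integral_comp_comm hbint]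
  rfl

lemma map_fractVec_comp (hμ : FlowInvariant X μ) {Φ : (Fin d → ℝ) → (Fin d → ℝ)}
    {M : Matrix (Fin d) (Fin d) ℤ} (hΦ : Continuous Φ) (hΦM : ZdEquivariant M Φ)
    (hX'c : ∀ t, Continuous (X' t)) (hX'e : ∀ t, ZdEquivariant 1 (X' t))
    (hconj : ∀ t x, X' t (Φ x) = Φ (X t x)) : FlowInvariant X' (μ.map (fractVec ∘ Φ)) := by
  intro t ψ hψ hψper
  have hT : Measurable (fractVec ∘ Φ) := measurable_fractVec.comp hΦ.measurable
  rw [integral_map (f := fun y => ψ (X' t y)) hT.aemeasurable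
      (hψ.comp (hX'c t)).aestronglyMeasurable,
    integral_map hT.aemeasurable hψ.aestronglyMeasurable]
  calc ∫ x, ψ (X' t (fractVec (Φ x))) ∂μ = ∫ x, ψ (Φ (X t x)) ∂μ := by
        congr 1 with x
        rw [← hconj]
        exact (hψper.comp_zdEquivariant (hX'e t)).apply_fractVec (Φ x)
    _ = ∫ x, ψ (Φ x) ∂μ := hμ t _ (hψ.comp hΦ) (hψper.comp_zdEquivariant hΦM)
    _ = ∫ x, ψ (fractVec (Φ x)) ∂μ := by
        congr 1 with x
        exact (hψper.apply_fractVec _).symm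

end FlowInvariant

lemma map_fractVec_comp_compl_unitCube {Φ : (Fin d → ℝ) → (Fin d → ℝ)} (hΦ : Measurable Φ)
    (μ : Measure (Fin d → ℝ)) : μ.map (fractVec ∘ Φ) (unitCube d)ᶜ = 0 := by
  have hcube : MeasurableSet (unitCube d) := by
    simpa [unitCube, Set.pi] using MeasurableSet.univ_pi fun _ : Fin d => measurableSet_Ico
  rw [Measure.map_apply (measurable_fractVec.comp hΦ) hcube.compl]
  convert measure_empty (μ := μ)
  exact eq_empty_of_forall_notMem fun x hx => hx (fractVec_mem_unitCube _)

theorem mulVec_mem_rotationSet_of_semiconj {b b' : (Fin d → ℝ) → (Fin d → ℝ)}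
    {X X' : ℝ → (Fin d → ℝ) → (Fin d → ℝ)} (hb : ContDiff ℝ 1 b) (hbper : ZdPeriodic b)
    (hb' : ContDiff ℝ 1 b') (hb'per : ZdPeriodic b') (hX : IsFlowOf b X)
    (hX' : IsFlowOf b' X') {Φ : (Fin d → ℝ) → (Fin d → ℝ)} {M : Matrix (Fin d) (Fin d) ℤ}
    (hΦ : ContDiff ℝ 1 Φ) (hΦM : ZdEquivariant M Φ) (hconj : ∀ t x, X' t (Φ x) = Φ (X t x))
    {ζ : Fin d → ℝ} (hζ : ζ ∈ rotationSet b X) :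
    M.map (Int.cast : ℤ → ℝ) *ᵥ ζ ∈ rotationSet b' X' := by
  obtain ⟨μ, hμP, -, hμ, rfl⟩ := hζ
  obtain ⟨K, hK⟩ := hbper.exists_lipschitzWith hb
  obtain ⟨K', hK'⟩ := hb'per.exists_lipschitzWith hb'
  have hT : Measurable (fractVec ∘ Φ) := measurable_fractVec.comp hΦ.continuous.measurable
  refine ⟨μ.map (fractVec ∘ Φ), Measure.isProbabilityMeasure_map hT.aemeasurable,
    map_fractVec_comp_compl_unitCube hΦ.continuous.measurable μ,
    hμ.map_fractVec_comp hΦ.continuous hΦM (hX'.continuous hK') (hX'.zdEquivariant hK' hb'per)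
      hconj, ?_⟩
  rw [integral_map hT.aemeasurable hb'.continuous.aestronglyMeasurable,
    ← hμ.integral_fderiv_apply_eq_mulVec hb.continuous hbper hX (hX.continuous hK) hΦ hΦM]
  congr 1 with x : 1
  rw [Function.comp_apply, hb'per.apply_fractVec,
    hX.apply_eq_fderiv_of_semiconj hX' (hΦ.differentiable one_ne_zero x) fun t => hconj t x]

lemma intCast_mulVec_leftInverse {M N : Matrix (Fin d) (Fin d) ℤ} (h : M * N = 1) :
    LeftInverse (M.map (Int.cast : ℤ → ℝ) *ᵥ ·) (N.map (Int.cast : ℤ → ℝ) *ᵥ ·) := fun v => by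
  have hcast := congrArg (Int.castRingHom ℝ).mapMatrix h
  rw [map_mul, map_one] at hcast
  exact (Matrix.mulVec_mulVec _ _ _).trans ((congrArg (· *ᵥ v) hcast).trans (Matrix.one_mulVec v))

lemma exists_image_eq_singleton_iff {α β : Type*} {f : α → β} (hf : Injective f) {s : Set α} :
    (∃ z, f '' s = {z}) ↔ ∃ w, s = {w} := by
  refine ⟨fun ⟨z, hz⟩ => ?_, fun ⟨w, hw⟩ => ⟨f w, hw ▸ image_singleton⟩⟩
  obtain ⟨w, -, rfl⟩ : z ∈ f '' s := hz ▸ rfl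
  exact ⟨w, image_injective.2 hf (hz.trans image_singleton.symm)⟩

theorem rotationSet_singleton_diffeomorphism_stability_general {d : ℕ}
    (b : (Fin d → ℝ) → (Fin d → ℝ)) (hb : ContDiff ℝ 1 b) (hbper : ZdPeriodic b)
    (X : ℝ → (Fin d → ℝ) → (Fin d → ℝ)) (hX : IsFlowOf b X)
    (Ψ Ψinv : (Fin d → ℝ) → (Fin d → ℝ))
    (hΨ : ContDiff ℝ 2 Ψ) (hΨinv : ContDiff ℝ 2 Ψinv)
    (hli : Function.LeftInverse Ψinv Ψ) (hri : Function.RightInverse Ψinv Ψ)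
    (A : Matrix (Fin d) (Fin d) ℤ) (hA : |A.det| = 1)
    (Ψs : (Fin d → ℝ) → (Fin d → ℝ)) (hΨsper : ZdPeriodic Ψs)
    (hdecomp : ∀ x : Fin d → ℝ, Ψ x = (A.map (Int.cast : ℤ → ℝ)) *ᵥ x + Ψs x)
    (bt : (Fin d → ℝ) → (Fin d → ℝ))
    (hbt : bt = fun x => fderiv ℝ Ψ (Ψinv x) (b (Ψinv x)))
    (Xt : ℝ → (Fin d → ℝ) → (Fin d → ℝ))
    (hXt : Xt = fun t x => Ψ (X t (Ψinv x))) :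
    (ContDiff ℝ 1 bt ∧ ZdPeriodic bt) ∧
    IsFlowOf bt Xt ∧
    ((∃ ζ, rotationSet bt Xt = {ζ}) ↔ (∃ ζ, rotationSet b X = {ζ})) ∧
    (∀ ζ : Fin d → ℝ, rotationSet b X = {ζ} →
      rotationSet bt Xt = {(A.map (Int.cast : ℤ → ℝ)) *ᵥ ζ}) := by
  obtain ⟨B, hAB, hBA⟩ : ∃ B : Matrix (Fin d) (Fin d) ℤ, A * B = 1 ∧ B * A = 1 :=
    have hdet := Int.isUnit_iff_abs_eq.2 hA
    ⟨A⁻¹, A.mul_nonsing_inv hdet, A.nonsing_inv_mul hdet⟩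
  have hΨA : ZdEquivariant A Ψ := zdEquivariant_of_eq_mulVec_add hdecomp hΨsper
  have hΨinvB : ZdEquivariant B Ψinv := hΨA.of_inverse hAB hli hri
  have hbt1 : ContDiff ℝ 1 bt := hbt ▸
    ((hΨ.fderiv_right le_rfl).comp (hΨinv.of_le one_le_two)).clm_apply
      (hb.comp (hΨinv.of_le one_le_two))
  have hbtper : ZdPeriodic bt := hbt ▸ fun κ x => by
    simp only [hΨinvB κ x, hΨA.fderiv_add, hbper _ _]
  have hXt' : IsFlowOf bt Xt := hbt ▸ hXt ▸ hX.conj (hΨ.differentiable two_ne_zero) hli hri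
  have hforward : MapsTo (A.map (Int.cast : ℤ → ℝ) *ᵥ ·) (rotationSet b X) (rotationSet bt Xt) :=
    fun _ => mulVec_mem_rotationSet_of_semiconj hb hbper hbt1 hbtper hX hXt'
      (hΨ.of_le one_le_two) hΨA fun t x => by simp [hXt, hli x]
  have hbackward : MapsTo (B.map (Int.cast : ℤ → ℝ) *ᵥ ·) (rotationSet bt Xt) (rotationSet b X) :=
    fun _ => mulVec_mem_rotationSet_of_semiconj hbt1 hbtper hb hbper hXt' hX
      (hΨinv.of_le one_le_two) hΨinvB fun t x => by simp [hXt, hli _]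
  have himage := (InvOn.bijOn ⟨fun v _ => intCast_mulVec_leftInverse hBA v,
    fun v _ => intCast_mulVec_leftInverse hAB v⟩ hforward hbackward).image_eq
  refine ⟨⟨hbt1, hbtper⟩, hXt', ?_, fun ζ hζ => by rw [← himage, hζ, image_singleton]⟩
  rw [← himage]
  exact exists_image_eq_singleton_iff (intCast_mulVec_leftInverse hBA).injective

/-- Stability of the singleton condition under a `C²`-diffeomorphism `Ψ` of
the torus: with `b̃(x) := ∇Ψ(Ψ⁻¹(x)) b(Ψ⁻¹(x))`, one has `b̃ ∈ C¹_♯(Y_d)^d`, the flow of `b̃`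
is `X̃(t,x) = Ψ(X(t,Ψ⁻¹(x)))`, the rotation set `C_b̃` is a singleton iff `C_b` is, and
`C_b = {ζ}` implies `C_b̃ = {Aζ}`. -/
theorem rotationSet_singleton_diffeomorphism_stability {d : ℕ} (hd : 1 ≤ d)
    (b : (Fin d → ℝ) → (Fin d → ℝ)) (hb : ContDiff ℝ 1 b) (hbper : ZdPeriodic b)
    (X : ℝ → (Fin d → ℝ) → (Fin d → ℝ)) (hX : IsFlowOf b X)
    (Ψ Ψinv : (Fin d → ℝ) → (Fin d → ℝ))
    (hΨ : ContDiff ℝ 2 Ψ) (hΨinv : ContDiff ℝ 2 Ψinv)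
    (hli : Function.LeftInverse Ψinv Ψ) (hri : Function.RightInverse Ψinv Ψ)
    (hdet : ∀ x : Fin d → ℝ, (fderiv ℝ Ψ x).det ≠ 0)
    (A : Matrix (Fin d) (Fin d) ℤ) (hA : |A.det| = 1)
    (Ψs : (Fin d → ℝ) → (Fin d → ℝ)) (hΨs : ContDiff ℝ 2 Ψs) (hΨsper : ZdPeriodic Ψs)
    (hdecomp : ∀ x : Fin d → ℝ, Ψ x = (A.map (Int.cast : ℤ → ℝ)) *ᵥ x + Ψs x)
    (bt : (Fin d → ℝ) → (Fin d → ℝ))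
    (hbt : bt = fun x => fderiv ℝ Ψ (Ψinv x) (b (Ψinv x)))
    (Xt : ℝ → (Fin d → ℝ) → (Fin d → ℝ))
    (hXt : Xt = fun t x => Ψ (X t (Ψinv x))) :
    (ContDiff ℝ 1 bt ∧ ZdPeriodic bt) ∧
    IsFlowOf bt Xt ∧
    ((∃ ζ, rotationSet bt Xt = {ζ}) ↔ (∃ ζ, rotationSet b X = {ζ})) ∧
    (∀ ζ : Fin d → ℝ, rotationSet b X = {ζ} →
      rotationSet bt Xt = {(A.map (Int.cast : ℤ → ℝ)) *ᵥ ζ}) :=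
  rotationSet_singleton_diffeomorphism_stability_general b hb hbper X hX Ψ Ψinv hΨ hΨinv hli hri A
    hA Ψs hΨsper hdecomp bt hbt Xt hXt
end
end
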